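/- arXiv:2101.10428 — 5 statements merged into one kernel-verified Lean document; each statement's English description precedes it below -/
import Mathlib

section
/- Let F, G : ℕ → ℂ, let m > 1 be a natural number, and let α, β, D ∈ ℂ with |β| < m. Suppose lim_{N→∞} F(N)/N = D, G(N) = α·F(⌊N/m⌋) + β·G(⌊N/m⌋) for all N ≥ 1, and F(0) = G(0) = 0. Then lim_{N→∞} G(N)/N = D·α/(m − β). -/
open Filter Topology

/-!
Unrolling the recursion (using `F 0 = G 0 = 0` and `m ≥ 2`, so that `⌊N / m ^ k⌋` vanishes
for large `k`) gives `G N = ∑ₖ βᵏ α F ⌊N / m ^ (k + 1)⌋`. Divided by `N`, the `k`-th term tends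
to `βᵏ α D / m ^ (k + 1)`, and since `‖F n‖ ≤ C n` it is dominated by `C ‖α‖ ‖β‖ᵏ / m ^ (k + 1)`,
which is summable because `‖β‖ < m`. Tannery's theorem lets us pass to the limit termwise, and
the limit is the geometric series `α D / (m - β)`.
-/

theorem tendsto_natCast_nat_div_div_atTop (d : ℕ) :
    Tendsto (fun N : ℕ => ((N / d : ℕ) : ℝ) / N) atTop (𝓝 (d : ℝ)⁻¹) := by
  refine ((tendsto_nat_floor_mul_div_atTop (inv_nonneg.2 (Nat.cast_nonneg' d))).comp
    tendsto_natCast_atTop_atTop).congr fun N => ?_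
  simp [inv_mul_eq_div, Nat.floor_div_eq_div]

section RCLike

variable {𝕜 : Type*} [RCLike 𝕜]

theorem Filter.Tendsto.comp_div_div {F : ℕ → 𝕜} {D : 𝕜}
    (hF : Tendsto (fun n => F n / n) atTop (𝓝 D)) {d : ℕ} (hd : d ≠ 0) :
    Tendsto (fun N => F (N / d) / N) atTop (𝓝 (D / d)) := by
  have hratio : Tendsto (fun N : ℕ => ((N / d : ℕ) : 𝕜) / N) atTop (𝓝 (d : 𝕜)⁻¹) := by
    simpa [Function.comp_def] using
      ((RCLike.continuous_ofReal (K := 𝕜)).tendsto _).comp (tendsto_natCast_nat_div_div_atTop d)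
  rw [div_eq_mul_inv]
  refine ((hF.comp (Nat.tendsto_div_const_atTop hd)).mul hratio).congr' ?_
  filter_upwards [eventually_ge_atTop d] with N hN
  have : ((N / d : ℕ) : 𝕜) ≠ 0 := by
    exact_mod_cast (Nat.div_pos hN (Nat.pos_of_ne_zero hd)).ne'
  simp only [Function.comp_apply]
  field_simp

theorem exists_norm_le_mul_of_tendsto_div {F : ℕ → 𝕜} {D : 𝕜}
    (hF : Tendsto (fun n => F n / n) atTop (𝓝 D)) (hF0 : F 0 = 0) :
    ∃ C, ∀ n : ℕ, ‖F n‖ ≤ C * n := by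
  obtain ⟨C, hC⟩ := isBounded_iff_forall_norm_le.1 (Metric.isBounded_range_of_tendsto _ hF)
  refine ⟨C, fun n => ?_⟩
  rcases eq_or_ne n 0 with rfl | hn
  · simp [hF0]
  · have := hC _ ⟨n, rfl⟩
    rwa [norm_div, RCLike.norm_natCast, div_le_iff₀ (by positivity)] at this

theorem norm_comp_div_div_le {F : ℕ → 𝕜} {C : ℝ} (hF : ∀ n : ℕ, ‖F n‖ ≤ C * n) (N d : ℕ) :
    ‖F (N / d) / N‖ ≤ C / d := by
  have hC : 0 ≤ C := by simpa using (norm_nonneg _).trans (hF 1)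
  rcases eq_or_ne N 0 with rfl | hN
  · simp only [CharP.cast_eq_zero, div_zero, norm_zero]
    positivity
  calc ‖F (N / d) / N‖ ≤ C * ((N / d : ℕ) : ℝ) / N := by
        rw [norm_div, RCLike.norm_natCast]
        gcongr
        exact hF _
    _ ≤ C * ((N : ℝ) / d) / N := by gcongr; exact Nat.cast_div_le
    _ = C / d := by
        rw [mul_div_assoc, div_div_cancel_left' (by exact_mod_cast hN), div_eq_mul_inv]

theorem tsum_pow_mul_div_pow_succ {β : 𝕜} {m : ℕ} (hβ : ‖β‖ < m) (c : 𝕜) :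
    ∑' k : ℕ, β ^ k * c / (m : 𝕜) ^ (k + 1) = c / (m - β) := by
  have hm0 : (0 : ℝ) < m := (norm_nonneg β).trans_lt hβ
  have hm : (m : 𝕜) ≠ 0 := by exact_mod_cast hm0.ne'
  have hmβ : (m : 𝕜) - β ≠ 0 := by
    intro h
    rw [← sub_eq_zero.1 h, RCLike.norm_natCast] at hβ
    exact lt_irrefl _ hβ
  have hratio : ‖β / m‖ < 1 := by
    rwa [norm_div, RCLike.norm_natCast, div_lt_one hm0]
  calc ∑' k : ℕ, β ^ k * c / (m : 𝕜) ^ (k + 1) = ∑' k : ℕ, c / m * (β / m) ^ k := by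
        congr 1; ext k; rw [div_pow, pow_succ]; field_simp
    _ = c / (m - β) := by
        rw [tsum_mul_left, tsum_geometric_of_norm_lt_one hratio]
        field_simp

end RCLike

theorem eq_sum_range_add_pow_mul_of_rec {R : Type*} [CommSemiring R] {F G : ℕ → R} {m : ℕ}
    {α β : R} (hrec : ∀ N, G N = α * F (N / m) + β * G (N / m)) (N K : ℕ) :
    G N = ∑ k ∈ Finset.range K, β ^ k * (α * F (N / m ^ (k + 1))) + β ^ K * G (N / m ^ K) := by
  induction K with
  | zero => simp
  | succ K ih =>
    rw [ih, hrec (N / m ^ K), Nat.div_div_eq_div_mul, ← pow_succ, Finset.sum_range_succ]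
    ring

theorem eq_tsum_of_rec {R : Type*} [CommSemiring R] [TopologicalSpace R] {F G : ℕ → R}
    {m : ℕ} {α β : R} (hm : 1 < m) (hF0 : F 0 = 0) (hG0 : G 0 = 0)
    (hrec : ∀ N, G N = α * F (N / m) + β * G (N / m)) (N : ℕ) :
    G N = ∑' k, β ^ k * (α * F (N / m ^ (k + 1))) := by
  rw [eq_sum_range_add_pow_mul_of_rec hrec N N, Nat.div_eq_of_lt (Nat.lt_pow_self hm), hG0,
    mul_zero, add_zero, tsum_eq_sum]
  intro k hk
  have : N < m ^ (k + 1) :=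
    (Nat.lt_pow_self hm).trans_le (Nat.pow_le_pow_right (by omega) (by simp at hk; omega))
  rw [Nat.div_eq_of_lt this, hF0, mul_zero, mul_zero]

theorem stmt1 (F G : ℕ → ℂ) (m : ℕ) (α β D : ℂ) (hm : 1 < m)
    (hβ : ‖β‖ < m)
    (hF : Tendsto (fun N : ℕ => F N / N) atTop (𝓝 D))
    (hrec : ∀ N : ℕ, 1 ≤ N → G N = α * F (N / m) + β * G (N / m))
    (hF0 : F 0 = 0) (hG0 : G 0 = 0) :
    Tendsto (fun N : ℕ => G N / N) atTop (𝓝 (D * α / (m - β))) := by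
  have hrec₀ : ∀ N, G N = α * F (N / m) + β * G (N / m) := by
    intro N
    rcases Nat.eq_zero_or_pos N with rfl | hN
    · simp [hF0, hG0]
    · exact hrec N hN
  obtain ⟨C, hC⟩ := exists_norm_le_mul_of_tendsto_div hF hF0
  have hm0 : (0 : ℝ) < m := by exact_mod_cast (zero_lt_one.trans hm)
  have hexpand : (fun N : ℕ => G N / N) =
      fun N : ℕ => ∑' k, β ^ k * (α * (F (N / m ^ (k + 1)) / N)) := by
    ext N
    simp only [eq_tsum_of_rec hm hF0 hG0 hrec₀ N, ← tsum_div_const, mul_div_assoc]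
  have hlimit : ∑' k : ℕ, β ^ k * (α * (D / (m : ℂ) ^ (k + 1))) = D * α / (m - β) := by
    simp only [← mul_div_assoc]
    rw [tsum_pow_mul_div_pow_succ hβ, mul_comm]
  rw [hexpand, ← hlimit]
  refine tendsto_tsum_of_dominated_convergence
    (bound := fun k => ‖β‖ ^ k * (‖α‖ * (C / (m : ℝ) ^ (k + 1)))) ?_ (fun k => ?_)
    (.of_forall fun N k => ?_)
  · have : Summable fun k => ‖α‖ * C / m * (‖β‖ / m) ^ k :=
      (summable_geometric_of_lt_one (by positivity) ((div_lt_one hm0).2 hβ)).mul_left _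
    refine this.congr fun k => ?_
    rw [div_pow, pow_succ]
    field_simp
  · simpa using ((hF.comp_div_div (pow_ne_zero (k + 1) (zero_lt_one.trans hm).ne')).const_mul
      α).const_mul (β ^ k)
  · rw [norm_mul, norm_mul, norm_pow]
    gcongr
    simpa using norm_comp_div_div_le hC N (m ^ (k + 1))
end

section
/- Let m > 1 be an integer. The natural density of the set of positive integers n such that the largest t with m^t | n is odd equals 1/(m+1). That is, if G(N) counts the i with 1 ≤ i ≤ N whose m-adic valuation is odd, then lim_{N→∞} G(N)/N = 1/(m+1). -/
/-!
Multiplication by `m` is a bijection from the integers in `[1, N / m]` of even `m`-adic valuation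
onto those in `[1, N]` of odd valuation, so the count `G` satisfies `G N = N / m - G (N / m)`.
This is the recursion satisfied by `N / (m + 1)` up to the remainder of `N` mod `m`, so
`|G N - N / (m + 1)|` is at most the number of base-`m` digits of `N`, which is `o(N)`.
-/

open Filter Topology Finset

def oddValuationCount (m N : ℕ) : ℕ := #{i ∈ Icc 1 N | Odd (padicValNat m i)}

section

variable {m : ℕ}

theorem oddValuationCount_eq_card_even (hm : 1 < m) (N : ℕ) :
    oddValuationCount m N = #{j ∈ Icc 1 (N / m) | Even (padicValNat m j)} := by
  have hm0 : 0 < m := by omega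
  symm
  apply card_nbij (m * ·)
  · intro j hj
    simp only [mem_coe, mem_filter, mem_Icc] at hj ⊢
    obtain ⟨⟨hj1, hjN⟩, hev⟩ := hj
    refine ⟨⟨?_, ?_⟩, ?_⟩
    · exact Nat.mul_pos hm0 hj1
    · exact (Nat.le_div_iff_mul_le hm0).1 hjN |>.trans_eq' (mul_comm _ _)
    · rw [padicValNat_base_mul hm (by omega)]
      exact hev.add_one
  · intro a _ b _ hab
    exact Nat.eq_of_mul_eq_mul_left hm0 hab
  · intro i hi
    simp only [mem_coe, mem_filter, mem_Icc] at hi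
    obtain ⟨⟨hi1, hiN⟩, hodd⟩ := hi
    have hdvd : m ∣ i := by
      simpa using (Nat.pow_dvd_iff_le_padicValNat (k := 1) hm.ne' (by omega)).2 hodd.pos
    obtain ⟨j, rfl⟩ := hdvd
    have hj : j ≠ 0 := by rintro rfl; simp at hi1
    refine ⟨j, ?_, rfl⟩
    simp only [mem_coe, mem_filter, mem_Icc]
    refine ⟨⟨by omega, (Nat.le_div_iff_mul_le hm0).2 (by linarith [mul_comm j m])⟩, ?_⟩
    rw [padicValNat_base_mul hm hj] at hodd
    simpa [Nat.odd_add_one, Nat.not_odd_iff_even] using hodd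

theorem oddValuationCount_le (N : ℕ) : oddValuationCount m N ≤ N :=
  (card_filter_le _ _).trans_eq (by simp)

theorem oddValuationCount_eq_sub (hm : 1 < m) (N : ℕ) :
    oddValuationCount m N = N / m - oddValuationCount m (N / m) := by
  have h := card_filter_add_card_filter_not (s := Icc 1 (N / m)) (fun j => Odd (padicValNat m j))
  simp only [Nat.not_odd_iff_even, Nat.card_Icc, add_tsub_cancel_right] at h
  rw [oddValuationCount_eq_card_even hm, oddValuationCount]
  omega

theorem abs_oddValuationCount_sub_le (hm : 1 < m) {N k : ℕ} (hN : N < m ^ k) :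
    |(oddValuationCount m N : ℝ) - N / (m + 1)| ≤ k := by
  induction k generalizing N with
  | zero =>
    obtain rfl : N = 0 := by simpa using hN
    simp [oddValuationCount]
  | succ k ih =>
    set q := N / m
    have hq : q < m ^ k := Nat.div_lt_of_lt_mul (by rwa [← pow_succ'])
    have hcount : (oddValuationCount m N : ℝ) = q - oddValuationCount m q := by
      rw [oddValuationCount_eq_sub hm, Nat.cast_sub (oddValuationCount_le q)]
    have hdiv : (N : ℝ) = m * q + (N % m : ℕ) := by exact_mod_cast (Nat.div_add_mod N m).symm
    have hr : ((N % m : ℕ) : ℝ) < m + 1 := by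
      exact_mod_cast (Nat.mod_lt N (by omega)).trans (Nat.lt_succ_self m)
    have hm1 : (0 : ℝ) < m + 1 := by positivity
    have herr : (oddValuationCount m N : ℝ) - N / (m + 1) =
        -((oddValuationCount m q : ℝ) - q / (m + 1)) - (N % m : ℕ) / (m + 1) := by
      rw [hcount, hdiv]
      field_simp
      ring
    have hrem : |((N % m : ℕ) : ℝ) / (m + 1)| ≤ 1 := by
      rw [abs_div, abs_of_pos hm1, abs_of_nonneg (by positivity)]
      exact (div_le_one hm1).2 hr.le
    calc |(oddValuationCount m N : ℝ) - N / (m + 1)|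
        ≤ |(oddValuationCount m q : ℝ) - q / (m + 1)| + |((N % m : ℕ) : ℝ) / (m + 1)| := by
          rw [herr, ← abs_neg ((oddValuationCount m q : ℝ) - q / (m + 1))]
          exact abs_sub _ _
      _ ≤ k + 1 := add_le_add (ih hq) hrem
      _ = (k + 1 : ℕ) := by push_cast; ring

theorem abs_oddValuationCount_sub_le_logb (hm : 1 < m) (N : ℕ) :
    |(oddValuationCount m N : ℝ) - N / (m + 1)| ≤ Real.logb m N + 1 :=
  calc |(oddValuationCount m N : ℝ) - N / (m + 1)| ≤ (Nat.log m N + 1 : ℕ) :=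
        abs_oddValuationCount_sub_le hm (Nat.lt_pow_succ_log_self hm N)
    _ ≤ Real.logb m N + 1 := by
        push_cast
        exact add_le_add_left (Real.natLog_le_logb N m) 1

theorem tendsto_oddValuationCount_div (hm : 1 < m) :
    Tendsto (fun N : ℕ => (oddValuationCount m N : ℝ) / N) atTop (𝓝 (1 / (m + 1))) := by
  have hsmall : Tendsto (fun N : ℕ => (Real.logb m N + 1) / N) atTop (𝓝 0) :=
    (Real.isLittleO_logb_id_atTop.add (Asymptotics.isLittleO_const_id_atTop 1))
      |>.tendsto_div_nhds_zero.comp tendsto_natCast_atTop_atTop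
  rw [← tendsto_sub_nhds_zero_iff]
  refine squeeze_zero_norm' ?_ hsmall
  filter_upwards [eventually_gt_atTop 0] with N hN
  have hN' : (0 : ℝ) < N := by exact_mod_cast hN
  have hsplit : (oddValuationCount m N : ℝ) / N - 1 / (m + 1)
      = ((oddValuationCount m N : ℝ) - N / (m + 1)) / N := by
    field_simp
  rw [Real.norm_eq_abs, hsplit, abs_div, abs_of_pos hN']
  exact div_le_div_of_nonneg_right (abs_oddValuationCount_sub_le_logb hm N) hN'.le

end

theorem stmt4 (m : ℕ) (hm : 1 < m)
    (G : ℕ → ℕ)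
    (hG : ∀ N, G N = ((Finset.Icc 1 N).filter (fun i => Odd (padicValNat m i))).card) :
    Tendsto (fun N : ℕ => (G N : ℝ) / N) atTop (𝓝 (1 / (m + 1))) := by
  obtain rfl : G = oddValuationCount m := funext hG
  exact tendsto_oddValuationCount_div hm
end

section
/- Let t be a squarefree positive integer and p a prime not dividing t. Define F(N) = |{r ≤ N : r squarefree, t | r}| and G(N) = |{r ≤ N : r squarefree, pt | r}|. Then F(⌊N/p⌋) = G(⌊N/p⌋) + G(N) for all N ≥ 1. -/
theorem stmt5 (t p : ℕ) (ht : 0 < t) (hsq : Squarefree t) (hp : p.Prime) (hpt : ¬ p ∣ t)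
    (F G : ℕ → ℕ)
    (hF : ∀ N, F N = ((Finset.Icc 1 N).filter (fun r => Squarefree r ∧ t ∣ r)).card)
    (hG : ∀ N, G N = ((Finset.Icc 1 N).filter (fun r => Squarefree r ∧ p * t ∣ r)).card) :
    ∀ N, 1 ≤ N → F (N / p) = G (N / p) + G N := by
  intro N hN
  have hcop : Nat.Coprime p t := (hp.coprime_iff_not_dvd).mpr hpt
  set M := N / p with hM
  rw [hF, hG, hG]
  have hsplit : (Finset.Icc 1 M).filter (fun r => Squarefree r ∧ t ∣ r)
      = ((Finset.Icc 1 M).filter (fun r => Squarefree r ∧ p * t ∣ r)) ∪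
        ((Finset.Icc 1 M).filter (fun r => (Squarefree r ∧ t ∣ r) ∧ ¬ p ∣ r)) := by
    ext r
    simp only [Finset.mem_filter, Finset.mem_union]
    constructor
    · rintro ⟨hr, hsq', hdvd⟩
      by_cases hpr : p ∣ r
      · exact Or.inl ⟨hr, hsq', hcop.mul_dvd_of_dvd_of_dvd hpr hdvd⟩
      · exact Or.inr ⟨hr, ⟨hsq', hdvd⟩, hpr⟩
    · rintro (⟨hr, hsq', hdvd⟩ | ⟨hr, ⟨hsq', hdvd⟩, _⟩)
      · exact ⟨hr, hsq', (dvd_mul_left t p).trans hdvd⟩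
      · exact ⟨hr, hsq', hdvd⟩
  have hdisj : Disjoint ((Finset.Icc 1 M).filter (fun r => Squarefree r ∧ p * t ∣ r))
      ((Finset.Icc 1 M).filter (fun r => (Squarefree r ∧ t ∣ r) ∧ ¬ p ∣ r)) := by
    rw [Finset.disjoint_left]
    rintro r hr1 hr2
    simp only [Finset.mem_filter] at hr1 hr2
    exact hr2.2.2 ((dvd_mul_right p t).trans hr1.2.2)
  rw [hsplit, Finset.card_union_of_disjoint hdisj]
  congr 1
  refine Finset.card_bij (fun r _ => p * r) ?_ ?_ ?_
  · rintro r hr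
    simp only [Finset.mem_filter, Finset.mem_Icc] at hr ⊢
    obtain ⟨⟨hr1, hr2⟩, ⟨hsq', hdvd⟩, hndvd⟩ := hr
    refine ⟨⟨Nat.mul_pos hp.pos hr1, ?_⟩, ?_, mul_dvd_mul_left p hdvd⟩
    · have := (Nat.le_div_iff_mul_le hp.pos).mp hr2
      have := Nat.mul_comm p r
      omega
    · exact Nat.squarefree_mul_iff.mpr ⟨(hp.coprime_iff_not_dvd).mpr hndvd,
        hp.squarefree, hsq'⟩
  · intro a ha b hb hab
    exact Nat.eq_of_mul_eq_mul_left hp.pos hab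
  · rintro b hb
    simp only [Finset.mem_filter, Finset.mem_Icc] at hb
    obtain ⟨⟨hb1, hb2⟩, hsq', hdvd⟩ := hb
    obtain ⟨a, rfl⟩ := (dvd_mul_right p t).trans hdvd
    have ha0 : 0 < a := Nat.pos_of_ne_zero (by rintro rfl; simp at hb1)
    have hsqa := Nat.squarefree_mul_iff.mp hsq'
    refine ⟨a, ?_, rfl⟩
    simp only [Finset.mem_filter, Finset.mem_Icc]
    refine ⟨⟨ha0, (Nat.le_div_iff_mul_le hp.pos).mpr (by linarith [hb2, Nat.mul_comm p a])⟩,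
      ⟨hsqa.2.2, ?_⟩, fun h => hp.one_lt.ne' (hsqa.1.eq_one_of_dvd h)⟩
    exact (mul_dvd_mul_iff_left hp.pos.ne').mp hdvd
end

section
/- lim_{N→∞} (1/N) ∑_{n=1}^{N} φ(n)/n = 6/π². -/
/-!
Möbius inversion of `∑_{d ∣ n} φ d = n` gives `φ n / n = ∑_{d ∣ n} μ d / d`, and exchanging the
order of summation turns the average into `(1/N) ∑_{d ≤ N} ⌊N/d⌋ μ d / d`. Since `⌊N/d⌋ / N → 1/d`
and `⌊N/d⌋ / N ≤ 1/d`, dominated convergence gives the limit `∑ μ d / d² = 1 / ζ(2) = 6 / π²`.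
-/

open Filter Topology Real
open ArithmeticFunction Finset
open scoped ArithmeticFunction.Moebius LSeries.notation

theorem totient_div_self_eq_sum_moebius_div (n : ℕ) :
    (n.totient : ℝ) / n = ∑ d ∈ n.divisors, (μ d : ℝ) / d := by
  rcases n.eq_zero_or_pos with rfl | hn
  · simp
  have inversion : ∑ x ∈ n.divisorsAntidiagonal, (μ x.1 : ℝ) * x.2 = n.totient :=
    (sum_eq_iff_sum_mul_moebius_eq (f := fun m => (m.totient : ℝ)) (g := (↑))).mp
      (fun m _ => mod_cast m.sum_totient) n hn
  rw [← inversion, sum_div, Nat.sum_divisorsAntidiagonal (fun d e => (μ d : ℝ) * e / n)]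
  refine sum_congr rfl fun d hd => ?_
  have hd0 : (d : ℝ) ≠ 0 := mod_cast (Nat.pos_of_mem_divisors hd).ne'
  rw [Nat.cast_div (Nat.dvd_of_mem_divisors hd) hd0]
  field_simp

theorem sum_Icc_sum_divisors_eq_sum_div_mul {R : Type*} [Semiring R] (f : ℕ → R) (N : ℕ) :
    ∑ n ∈ Icc 1 N, ∑ d ∈ n.divisors, f d = ∑ d ∈ Icc 1 N, ((N / d : ℕ) : R) * f d := by
  rw [sum_comm' (t' := Icc 1 N) (s' := fun d => {n ∈ Ioc 0 N | d ∣ n})]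
  · simp_rw [sum_const, Nat.Ioc_filter_dvd_card_eq_div, nsmul_eq_mul]
  · intro n d
    simp only [mem_Icc, Nat.mem_divisors, mem_filter, mem_Ioc]
    constructor
    · rintro ⟨⟨hn, hnN⟩, hdn, -⟩
      exact ⟨⟨⟨hn, hnN⟩, hdn⟩, Nat.pos_of_dvd_of_pos hdn hn, (Nat.le_of_dvd hn hdn).trans hnN⟩
    · rintro ⟨⟨⟨hn, hnN⟩, hdn⟩, -⟩
      exact ⟨⟨hn, hnN⟩, hdn, by omega⟩

theorem tendsto_natCast_div_div_atTop {d : ℕ} (hd : d ≠ 0) :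
    Tendsto (fun N : ℕ => ((N / d : ℕ) : ℝ) / N) atTop (𝓝 (1 / d)) := by
  have hd' : (0 : ℝ) < d := by positivity
  have h := (tendsto_nat_floor_div_atTop.comp
    (tendsto_natCast_atTop_atTop.atTop_div_const hd')).mul_const (1 / (d : ℝ))
  rw [one_mul] at h
  refine h.congr' ?_
  filter_upwards [eventually_ne_atTop 0] with N hN
  simp only [Function.comp_apply, Nat.floor_div_eq_div]
  field_simp

theorem natCast_div_div_le (N d : ℕ) : ((N / d : ℕ) : ℝ) / N ≤ 1 / d := by
  rcases N.eq_zero_or_pos with rfl | hN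
  · simp
  calc ((N / d : ℕ) : ℝ) / N ≤ (N / d : ℝ) / N := by gcongr; exact Nat.cast_div_le
    _ = 1 / d := by field_simp

theorem tendsto_sum_Icc_div_mul_div_atTop {a : ℕ → ℝ} (ha : Summable fun d => a d / d) :
    Tendsto (fun N : ℕ => (∑ d ∈ Icc 1 N, ((N / d : ℕ) : ℝ) * a d) / N) atTop
      (𝓝 (∑' d, a d / d)) := by
  have hsum (N : ℕ) : ∑' d, ((N / d : ℕ) : ℝ) / N * a d
      = (∑ d ∈ Icc 1 N, ((N / d : ℕ) : ℝ) * a d) / N := by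
    rw [tsum_eq_sum (s := Icc 1 N), sum_div]
    · exact sum_congr rfl fun d _ => by ring
    · -- `N / d = 0` outside `Icc 1 N`, including `d = 0`
      intro d hd
      have : N / d = 0 := Nat.div_eq_zero_iff.mpr (by rw [mem_Icc] at hd; omega)
      simp [this]
  simp_rw [← hsum]
  refine tendsto_tsum_of_dominated_convergence ha.abs (fun d => ?_) (.of_forall fun N d => ?_)
  · rcases eq_or_ne d 0 with rfl | hd
    · simp
    · simpa [div_eq_inv_mul] using (tendsto_natCast_div_div_atTop hd).mul_const (a d)
  · calc ‖((N / d : ℕ) : ℝ) / N * a d‖ = ((N / d : ℕ) : ℝ) / N * |a d| := by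
          rw [norm_mul, norm_of_nonneg (by positivity), norm_eq_abs]
      _ ≤ 1 / d * |a d| := mul_le_mul_of_nonneg_right (natCast_div_div_le N d) (abs_nonneg _)
      _ = |a d / d| := by rw [abs_div, Nat.abs_cast]; ring

theorem hasSum_moebius_div_sq : HasSum (fun d : ℕ => (μ d : ℝ) / d ^ 2) (6 / π ^ 2) := by
  have hs : 1 < (2 : ℂ).re := by norm_num
  have hL : L ↗μ 2 = 6 / π ^ 2 := by
    have h := LSeries_zeta_mul_Lseries_moebius hs
    rw [LSeries_zeta_eq_riemannZeta hs, riemannZeta_two] at h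
    have : (π : ℂ) ≠ 0 := mod_cast pi_ne_zero
    field_simp
    linear_combination 6 * h
  have h : HasSum (LSeries.term ↗μ 2) (6 / π ^ 2) :=
    hL ▸ (LSeriesSummable_moebius_iff.mpr hs).LSeriesHasSum
  rw [← Complex.hasSum_ofReal]
  push_cast
  convert h using 1
  ext (_ | n)
  · simp
  · rw [LSeries.term_of_ne_zero n.succ_ne_zero]
    norm_cast

theorem stmt8 :
    Tendsto (fun N : ℕ => (∑ n ∈ Finset.Icc 1 N, (Nat.totient n : ℝ) / n) / N)
      atTop (𝓝 (6 / π ^ 2)) := by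
  have hμ : (fun d : ℕ => (μ d : ℝ) / d / d) = fun d => (μ d : ℝ) / d ^ 2 := by
    simp_rw [div_div, sq]
  have h := tendsto_sum_Icc_div_mul_div_atTop (a := fun d => (μ d : ℝ) / d)
    (hμ ▸ hasSum_moebius_div_sq.summable)
  rw [hμ, hasSum_moebius_div_sq.tsum_eq] at h
  simpa only [totient_div_self_eq_sum_moebius_div, sum_Icc_sum_divisors_eq_sum_div_mul] using h
end

section
/- Let p be a prime, j ≥ 1 an integer, and t a positive integer not divisible by p. If lim_{N→∞} (1/N) ∑_{t|n, n≤N} φ(n)/n = L, then lim_{N→∞} (1/N) ∑_{p^j t | n, n≤N} φ(n)/n = L/(p^{j−1}(p+1)). -/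
/-!
Write `S_d(N) = ∑_{n ≤ N, d ∣ n} φ(n)/n`. Substituting `n = a m` gives `S_{ad}(N) = S_d(N / a)`
whenever every prime factor of `a` divides `d`, because then `φ(am)/(am) = φ(m)/m`; this reduces
the claim to `j = 1`, at the cost of the factor `p^{-(j-1)}`. For `p ∤ t`, splitting the terms of
`S_{pt}` according to whether `p ∣ m` gives `S_{pt}(N) = (1 - 1/p) S_t(N/p) + (1/p) S_{pt}(N/p)`,
which unrolls to `S_{pt}(N) = (1 - 1/p) ∑_k p^{-k} S_t(N/p^{k+1})`. Since `|S_t(M)| ≤ M`, Tannery's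
theorem lets us divide by `N` and pass to the limit termwise, which gives
`(1 - 1/p) ∑_k p^{-k} L/p^{k+1} = L/(p+1)`.
-/

open Filter Topology Finset

noncomputable def totientRatioSum (d N : ℕ) : ℝ :=
  ∑ n ∈ (Icc 1 N).filter (fun n => d ∣ n), (n.totient : ℝ) / n

namespace Nat

theorem primeFactors_pow_subset (n k : ℕ) : (n ^ k).primeFactors ⊆ n.primeFactors := by
  cases k with
  | zero => simp
  | succ k => rw [primeFactors_pow_succ]

theorem totient_div_self_eq_prod_primeFactors {n : ℕ} (hn : n ≠ 0) :
    (n.totient : ℝ) / n = ∏ q ∈ n.primeFactors, (1 - (q : ℝ)⁻¹) := by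
  have h := congrArg (fun x : ℚ => (x : ℝ)) (totient_eq_mul_prod_factors n)
  push_cast at h
  rw [h, mul_div_cancel_left₀ _ (cast_ne_zero.2 hn)]

theorem totient_mul_div_of_primeFactors_subset {a m : ℕ} (ha : a ≠ 0) (hm : m ≠ 0)
    (h : a.primeFactors ⊆ m.primeFactors) :
    ((a * m).totient : ℝ) / (a * m : ℕ) = m.totient / m := by
  rw [totient_div_self_eq_prod_primeFactors (mul_ne_zero ha hm),
    totient_div_self_eq_prod_primeFactors hm, primeFactors_mul ha hm, union_eq_right.2 h]

theorem totient_prime_mul_div {p m : ℕ} (hp : p.Prime) (hm : m ≠ 0) :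
    ((p * m).totient : ℝ) / (p * m : ℕ)
      = (1 - (p : ℝ)⁻¹) * (m.totient / m)
        + (p : ℝ)⁻¹ * (if p ∣ m then (m.totient : ℝ) / m else 0) := by
  split_ifs with hpm
  · rw [totient_mul_div_of_primeFactors_subset hp.ne_zero hm
      (by simpa [hp.primeFactors] using ⟨hp, hpm, hm⟩)]
    ring
  · rw [totient_div_self_eq_prod_primeFactors (mul_ne_zero hp.ne_zero hm),
      totient_div_self_eq_prod_primeFactors hm, primeFactors_mul hp.ne_zero hm, hp.primeFactors,
      ← insert_eq, prod_insert fun h => hpm (dvd_of_mem_primeFactors h)]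
    ring

end Nat

theorem sum_Icc_filter_mul_dvd {M : Type*} [AddCommMonoid M] (f : ℕ → M) {a : ℕ} (ha : 0 < a)
    (b N : ℕ) :
    ∑ n ∈ (Icc 1 N).filter (fun n => a * b ∣ n), f n
      = ∑ m ∈ (Icc 1 (N / a)).filter (fun m => b ∣ m), f (a * m) := by
  refine sum_nbij' (· / a) (a * ·) ?_ ?_ ?_ ?_ ?_ <;> simp only [mem_filter, mem_Icc]
  · rintro n ⟨⟨h1, hN⟩, c, rfl⟩
    rw [mul_assoc, Nat.mul_div_cancel_left _ ha, Nat.le_div_iff_mul_le ha]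
    exact ⟨⟨Nat.pos_of_ne_zero (by rintro h; simp [mul_assoc, h] at h1), by linarith⟩,
      dvd_mul_right b c⟩
  · rintro m ⟨⟨h1, hN⟩, hbm⟩
    refine ⟨⟨Nat.one_le_iff_ne_zero.2 (by positivity), ?_⟩, mul_dvd_mul_left a hbm⟩
    rw [mul_comm]
    exact (Nat.le_div_iff_mul_le ha).1 hN
  · rintro n ⟨-, c, rfl⟩
    rw [mul_assoc, Nat.mul_div_cancel_left _ ha]
  · intro m _
    exact Nat.mul_div_cancel_left m ha
  · rintro n ⟨-, c, rfl⟩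
    rw [mul_assoc, Nat.mul_div_cancel_left _ ha]

theorem totientRatioSum_zero_right (d : ℕ) : totientRatioSum d 0 = 0 := by
  simp [totientRatioSum]

theorem abs_totientRatioSum_le (d N : ℕ) : |totientRatioSum d N| ≤ N := by
  rw [abs_of_nonneg (sum_nonneg fun n _ => by positivity)]
  calc totientRatioSum d N ≤ ∑ n ∈ (Icc 1 N).filter (fun n => d ∣ n), (1 : ℝ) :=
        sum_le_sum fun n _ => div_le_one_of_le₀ (mod_cast n.totient_le) n.cast_nonneg
    _ ≤ ∑ n ∈ Icc 1 N, (1 : ℝ) := sum_le_sum_of_subset_of_nonneg (filter_subset _ _) (by simp)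
    _ = N := by simp

theorem totientRatioSum_mul_of_primeFactors_subset {a d : ℕ} (ha : a ≠ 0)
    (h : a.primeFactors ⊆ d.primeFactors) (N : ℕ) :
    totientRatioSum (a * d) N = totientRatioSum d (N / a) := by
  rw [totientRatioSum, sum_Icc_filter_mul_dvd _ (Nat.pos_of_ne_zero ha)]
  refine sum_congr rfl fun m hm => ?_
  simp only [mem_filter, mem_Icc] at hm
  have hm0 : m ≠ 0 := by omega
  exact Nat.totient_mul_div_of_primeFactors_subset ha hm0
    (h.trans (Nat.primeFactors_mono hm.2 hm0))

theorem totientRatioSum_prime_mul {p t : ℕ} (hp : p.Prime) (hpt : ¬ p ∣ t) (N : ℕ) :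
    totientRatioSum (p * t) N = (1 - (p : ℝ)⁻¹) * totientRatioSum t (N / p)
      + (p : ℝ)⁻¹ * totientRatioSum (p * t) (N / p) := by
  have hdvd : ∀ m, t ∣ m ∧ p ∣ m ↔ p * t ∣ m := fun m =>
    ⟨fun ⟨htm, hpm⟩ => (hp.coprime_iff_not_dvd.2 hpt).mul_dvd_of_dvd_of_dvd hpm htm,
      fun h => ⟨(dvd_mul_left t p).trans h, (dvd_mul_right p t).trans h⟩⟩
  rw [totientRatioSum, sum_Icc_filter_mul_dvd _ hp.pos,
    sum_congr rfl fun m hm => Nat.totient_prime_mul_div hp (by simp at hm; omega),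
    sum_add_distrib, ← mul_sum, ← mul_sum, ← sum_filter, filter_filter]
  simp only [hdvd, totientRatioSum]

theorem eq_mul_tsum_of_eq_add_comp_div {a b : ℕ → ℝ} {p : ℕ} (hp : 2 ≤ p) {α β : ℝ}
    (ha0 : a 0 = 0) (hb0 : b 0 = 0) (hab : ∀ N, a N = α * b (N / p) + β * a (N / p)) (N : ℕ) :
    a N = α * ∑' k, β ^ k * b (N / p ^ (k + 1)) := by
  have unrolled : ∀ K, a N = α * ∑ k ∈ range K, β ^ k * b (N / p ^ (k + 1))
      + β ^ K * a (N / p ^ K) := by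
    intro K
    induction K with
    | zero => simp
    | succ K ih =>
      rw [ih, hab (N / p ^ K), Nat.div_div_eq_div_mul, ← pow_succ, sum_range_succ]
      ring
  have vanish : ∀ k, N ≤ k → N / p ^ k = 0 := fun k hk =>
    Nat.div_eq_of_lt ((Nat.lt_pow_self hp).trans_le (Nat.pow_le_pow_right (by omega) hk))
  rw [tsum_eq_sum (s := range N) fun k hk => by
      rw [vanish (k + 1) (by simp at hk; omega), hb0, mul_zero],
    unrolled N, vanish N le_rfl, ha0, mul_zero, add_zero]

theorem tendsto_comp_nat_div_div {b : ℕ → ℝ} {L : ℝ}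
    (hb : Tendsto (fun N : ℕ => b N / N) atTop (𝓝 L)) {q : ℕ} (hq : q ≠ 0) :
    Tendsto (fun N : ℕ => b (N / q) / N) atTop (𝓝 (L / q)) := by
  have hfloor : Tendsto (fun N : ℕ => ((N / q : ℕ) : ℝ) / N) atTop (𝓝 (q : ℝ)⁻¹) := by
    refine ((tendsto_nat_floor_mul_div_atTop (inv_nonneg.2 q.cast_nonneg)).comp
      tendsto_natCast_atTop_atTop).congr fun N => ?_
    simp [← div_eq_inv_mul, Nat.floor_div_eq_div]
  rw [div_eq_mul_inv]
  refine ((hb.comp (Nat.tendsto_div_const_atTop hq)).mul hfloor).congr' ?_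
  filter_upwards [eventually_ge_atTop q] with N hN
  have : ((N / q : ℕ) : ℝ) ≠ 0 := by exact_mod_cast (Nat.div_pos hN (Nat.pos_of_ne_zero hq)).ne'
  simp [div_mul_div_cancel₀ this]

theorem tendsto_tsum_pow_mul_comp_div {b : ℕ → ℝ} {L : ℝ}
    (hb : Tendsto (fun N : ℕ => b N / N) atTop (𝓝 L)) (hbN : ∀ N, |b N| ≤ N) {p : ℕ}
    (hp : p ≠ 0) {β : ℝ} (hβ : |β| < 1) :
    Tendsto (fun N : ℕ => (∑' k, β ^ k * b (N / p ^ (k + 1))) / N) atTop (𝓝 (L / (p - β))) := by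
  have hterm : ∀ k, Tendsto (fun N : ℕ => β ^ k * b (N / p ^ (k + 1)) / N) atTop
      (𝓝 (β ^ k * (L / p ^ (k + 1)))) := fun k => by
    simpa [mul_div_assoc] using
      (tendsto_comp_nat_div_div hb (pow_ne_zero (k + 1) hp)).const_mul (β ^ k)
  have hbound : ∀ N k, ‖β ^ k * b (N / p ^ (k + 1)) / N‖ ≤ |β| ^ k := fun N k => by
    rw [Real.norm_eq_abs, abs_div, abs_mul, abs_pow, Nat.abs_cast, mul_div_assoc]
    refine mul_le_of_le_one_right (by positivity) (div_le_one_of_le₀ ?_ N.cast_nonneg)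
    exact (hbN _).trans (mod_cast Nat.div_le_self _ _)
  have hlim := tendsto_tsum_of_dominated_convergence
    (summable_geometric_of_lt_one (abs_nonneg β) hβ) hterm (Eventually.of_forall (hbound ·))
  have hp1 : (1 : ℝ) ≤ p := Nat.one_le_cast.2 (Nat.pos_of_ne_zero hp)
  have hratio : |β / p| < 1 := by
    rw [abs_div, Nat.abs_cast]
    exact (div_le_self (abs_nonneg β) hp1).trans_lt hβ
  have hpβ : (p : ℝ) - β ≠ 0 := by linarith [le_abs_self β]
  have hsum : ∑' k, β ^ k * (L / p ^ (k + 1)) = L / (p - β) :=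
    calc ∑' k, β ^ k * (L / p ^ (k + 1)) = ∑' k, L / p * (β / p) ^ k := by
          congr 1; funext k; rw [pow_succ, div_pow]; field_simp
      _ = L / (p - β) := by
          rw [tsum_mul_left, tsum_geometric_of_abs_lt_one hratio]
          field_simp
  simpa only [tsum_div_const, hsum] using hlim

theorem tendsto_totientRatioSum_prime_mul {p t : ℕ} (hp : p.Prime) (hpt : ¬ p ∣ t) {L : ℝ}
    (hL : Tendsto (fun N : ℕ => totientRatioSum t N / N) atTop (𝓝 L)) :
    Tendsto (fun N : ℕ => totientRatioSum (p * t) N / N) atTop (𝓝 (L / (p + 1))) := by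
  have hp1 : (1 : ℝ) < p := Nat.one_lt_cast.2 hp.one_lt
  have hβ : |(p : ℝ)⁻¹| < 1 := by
    rw [abs_inv, Nat.abs_cast]
    exact inv_lt_one_of_one_lt₀ hp1
  have hlim := (tendsto_tsum_pow_mul_comp_div hL (abs_totientRatioSum_le t) hp.ne_zero
    hβ).const_mul (1 - (p : ℝ)⁻¹)
  convert hlim using 2 with N
  · rw [eq_mul_tsum_of_eq_add_comp_div hp.two_le (totientRatioSum_zero_right _)
      (totientRatioSum_zero_right _) (totientRatioSum_prime_mul hp hpt) N, mul_div_assoc]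
  · have : (p : ℝ) - 1 ≠ 0 := by linarith
    rw [show (p : ℝ) - (p : ℝ)⁻¹ = (p + 1) * (1 - (p : ℝ)⁻¹) by field_simp; ring]
    field_simp

theorem stmt12 (p t j : ℕ) (hp : p.Prime) (ht : 0 < t) (hpt : ¬ p ∣ t) (hj : 1 ≤ j) (L : ℝ)
    (hL : Tendsto (fun N : ℕ =>
      (∑ n ∈ (Finset.Icc 1 N).filter (fun n => t ∣ n), (Nat.totient n : ℝ) / n) / N)
      atTop (𝓝 L)) :
    Tendsto (fun N : ℕ =>
      (∑ n ∈ (Finset.Icc 1 N).filter (fun n => p ^ j * t ∣ n), (Nat.totient n : ℝ) / n) / N)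
      atTop (𝓝 (L / (p ^ (j - 1) * (p + 1)))) := by
  obtain ⟨k, rfl⟩ : ∃ k, j = k + 1 := ⟨j - 1, by omega⟩
  have hsubset : (p ^ k).primeFactors ⊆ (p * t).primeFactors :=
    (Nat.primeFactors_pow_subset p k).trans
      (Nat.primeFactors_mono (dvd_mul_right p t) (mul_ne_zero hp.ne_zero ht.ne'))
  have hsplit : ∀ N, totientRatioSum (p ^ (k + 1) * t) N = totientRatioSum (p * t) (N / p ^ k) :=
    fun N => by
      rw [pow_succ, mul_assoc,
        totientRatioSum_mul_of_primeFactors_subset (pow_ne_zero k hp.ne_zero) hsubset]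
  have hlim := tendsto_comp_nat_div_div (tendsto_totientRatioSum_prime_mul hp hpt hL)
    (pow_ne_zero k hp.ne_zero)
  show Tendsto (fun N : ℕ => totientRatioSum (p ^ (k + 1) * t) N / N) atTop
    (𝓝 (L / (p ^ k * (p + 1))))
  simp_rw [hsplit]
  convert hlim using 2
  push_cast
  rw [div_div, mul_comm]
end
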